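/- arXiv:1012.3870 — 6 statements merged into one kernel-verified Lean document; each statement's English description precedes it below -/
import Mathlib

section
/- In a modular involutive quantaloid Q, if f : X → Y is a left adjoint morphism with right adjoint f*, then f* = f°, where (−)° is the involution. -/
/-!
The unit `𝟙 ≤ f ≫ f*` and the modular law give
`f° ≤ ((f° ≫ f) ≫ f*) ⊓ f° ≤ ((f° ≫ f) ⊓ (f° ≫ f*°)) ≫ f*`, and since `f° ≫ f*° = (f* ≫ f)° ≤ 𝟙`
this is at most `f*`.
The involution turns the adjunction `f ⊣ f*` into `f*° ⊣ f°`, and the same argument applied to it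
gives `f* ≤ f°`.
-/

open CategoryTheory

universe v u

theorem monotone_of_map_sSup {α β : Type*} [CompleteLattice α] [CompleteLattice β] {φ : α → β}
    (h : ∀ S, φ (sSup S) = ⨆ a ∈ S, φ a) : Monotone φ :=
  OrderHomClass.mono (⟨φ, fun S => (h S).trans sSup_image.symm⟩ : sSupHom α β)

section Involution

variable {Q : Type u} [Category.{v} Q] [∀ X Y : Q, CompleteLattice (X ⟶ Y)]
  (inv : ∀ {X Y : Q}, (X ⟶ Y) → (Y ⟶ X))

theorem id_le_inv_comp_inv (inv_mono : ∀ X Y : Q, Monotone (@inv X Y))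
    (inv_comp : ∀ {X Y Z : Q} (f : X ⟶ Y) (g : Y ⟶ Z), inv (f ≫ g) = inv g ≫ inv f)
    (inv_id : ∀ X : Q, inv (𝟙 X) = 𝟙 X) {X Y : Q} {f : X ⟶ Y} {g : Y ⟶ X}
    (h : 𝟙 X ≤ f ≫ g) : 𝟙 X ≤ inv g ≫ inv f := by
  simpa only [inv_id, inv_comp] using inv_mono _ _ h

theorem inv_comp_inv_le_id (inv_mono : ∀ X Y : Q, Monotone (@inv X Y))
    (inv_comp : ∀ {X Y Z : Q} (f : X ⟶ Y) (g : Y ⟶ Z), inv (f ≫ g) = inv g ≫ inv f)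
    (inv_id : ∀ X : Q, inv (𝟙 X) = 𝟙 X) {X Y : Q} {f : X ⟶ Y} {g : Y ⟶ X}
    (h : g ≫ f ≤ 𝟙 Y) : inv f ≫ inv g ≤ 𝟙 Y := by
  simpa only [inv_id, inv_comp] using inv_mono _ _ h

theorem inv_le_of_id_le_comp
    (comp_mono_left : ∀ {X Y Z : Q} (g : Y ⟶ Z), Monotone fun f : X ⟶ Y => f ≫ g)
    (comp_mono_right : ∀ {X Y Z : Q} (f : X ⟶ Y), Monotone fun g : Y ⟶ Z => f ≫ g)
    (modular : ∀ {X Y Z : Q} (f : X ⟶ Y) (g : Y ⟶ Z) (h : X ⟶ Z),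
      (f ≫ g) ⊓ h ≤ (f ⊓ (h ≫ inv g)) ≫ g)
    {X Y : Q} {f : X ⟶ Y} {g : Y ⟶ X} (unit : 𝟙 X ≤ f ≫ g) (h : inv f ≫ inv g ≤ 𝟙 Y) :
    inv f ≤ g :=
  calc inv f ≤ ((inv f ≫ f) ≫ g) ⊓ inv f :=
        le_inf (by simpa only [Category.comp_id, Category.assoc] using comp_mono_right (inv f) unit)
          le_rfl
    _ ≤ ((inv f ≫ f) ⊓ (inv f ≫ inv g)) ≫ g := modular _ _ _
    _ ≤ 𝟙 Y ≫ g := comp_mono_left g (inf_le_right.trans h)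
    _ = g := Category.id_comp g

end Involution

/-- In a modular involutive quantaloid, the right adjoint of a left adjoint morphism
equals its involute. -/
theorem stmt_0 {Q : Type u} [Category.{v} Q] [∀ X Y : Q, CompleteLattice (X ⟶ Y)]
    (sSup_comp : ∀ {X Y Z : Q} (S : Set (X ⟶ Y)) (g : Y ⟶ Z), sSup S ≫ g = ⨆ f ∈ S, f ≫ g)
    (comp_sSup : ∀ {X Y Z : Q} (f : X ⟶ Y) (S : Set (Y ⟶ Z)), f ≫ sSup S = ⨆ g ∈ S, f ≫ g)
    (inv : ∀ {X Y : Q}, (X ⟶ Y) → (Y ⟶ X))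
    (inv_inv : ∀ {X Y : Q} (f : X ⟶ Y), inv (inv f) = f)
    (inv_comp : ∀ {X Y Z : Q} (f : X ⟶ Y) (g : Y ⟶ Z), inv (f ≫ g) = inv g ≫ inv f)
    (inv_id : ∀ X : Q, inv (𝟙 X) = 𝟙 X)
    (inv_sSup : ∀ {X Y : Q} (S : Set (X ⟶ Y)), inv (sSup S) = ⨆ f ∈ S, inv f)
    (modular : ∀ {X Y Z : Q} (f : X ⟶ Y) (g : Y ⟶ Z) (h : X ⟶ Z),
      (f ≫ g) ⊓ h ≤ (f ⊓ (h ≫ inv g)) ≫ g)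
    {X Y : Q} (f : X ⟶ Y) (fs : Y ⟶ X)
    (adj₁ : 𝟙 X ≤ f ≫ fs) (adj₂ : fs ≫ f ≤ 𝟙 Y) :
    fs = inv f := by
  have inv_mono : ∀ X Y : Q, Monotone (@inv X Y) := fun _ _ => monotone_of_map_sSup inv_sSup
  have inv_le_right_adjoint : ∀ {A B : Q} {u : A ⟶ B} {us : B ⟶ A},
      𝟙 A ≤ u ≫ us → inv u ≫ inv us ≤ 𝟙 B → inv u ≤ us :=
    inv_le_of_id_le_comp inv (fun g => monotone_of_map_sSup (sSup_comp · g))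
      (fun f => monotone_of_map_sSup (comp_sSup f)) modular
  refine le_antisymm ?_ (inv_le_right_adjoint adj₁ (inv_comp_inv_le_id inv inv_mono inv_comp inv_id adj₂))
  simpa only [inv_inv] using
    inv_le_right_adjoint (u := inv fs) (id_le_inv_comp_inv inv inv_mono inv_comp inv_id adj₁)
      (by simpa only [inv_inv] using adj₂)
end

section
/- If Q is a small involutive quantaloid such that Matr(Q) is modular, then Q is locally localic: for f and a family (g_i)_{i∈I} in Q(X,Y), one has f ∧ (⋁_i g_i) ≤ ⋁_i (f ∧ g_i). -/
open CategoryTheory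

universe v u

/-! Modularity of `Matr(Q)` for the `1 × I` row `(gᵢ)`, the `I × 1` column of identities and
the `1 × 1` matrix `f` reads `(⨆ i, gᵢ) ⊓ f ≤ ⨆ i, gᵢ ⊓ f ≫ 1°`, and `1° = 1`. -/

/-- If `Q` is a small involutive quantaloid such that `Matr(Q)` is modular (stated
entrywise), then `Q` is locally localic: binary meets distribute over suprema in
each hom-lattice. -/
theorem stmt_10 {Q : Type u} [Category.{v} Q] [∀ X Y : Q, CompleteLattice (X ⟶ Y)]
    (sSup_comp : ∀ {X Y Z : Q} (S : Set (X ⟶ Y)) (g : Y ⟶ Z), sSup S ≫ g = ⨆ f ∈ S, f ≫ g)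
    (comp_sSup : ∀ {X Y Z : Q} (f : X ⟶ Y) (S : Set (Y ⟶ Z)), f ≫ sSup S = ⨆ g ∈ S, f ≫ g)
    (inv : ∀ {X Y : Q}, (X ⟶ Y) → (Y ⟶ X))
    (inv_inv : ∀ {X Y : Q} (f : X ⟶ Y), inv (inv f) = f)
    (inv_comp : ∀ {X Y Z : Q} (f : X ⟶ Y) (g : Y ⟶ Z), inv (f ≫ g) = inv g ≫ inv f)
    (inv_id : ∀ X : Q, inv (𝟙 X) = 𝟙 X)
    (inv_sSup : ∀ {X Y : Q} (S : Set (X ⟶ Y)), inv (sSup S) = ⨆ f ∈ S, inv f)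
    -- modularity of Matr(Q), stated entrywise:
    (matrModular : ∀ (X Y Z : Type v) (tX : X → Q) (tY : Y → Q) (tZ : Z → Q)
      (M : ∀ x y, tX x ⟶ tY y) (N : ∀ y z, tY y ⟶ tZ z) (P : ∀ x z, tX x ⟶ tZ z)
      (x : X) (z : Z),
      (⨆ y, M x y ≫ N y z) ⊓ P x z ≤
        ⨆ y, (M x y ⊓ ⨆ z', P x z' ≫ inv (N y z')) ≫ N y z)
    {X Y : Q} (f : X ⟶ Y) (I : Type v) (g : I → (X ⟶ Y)) :
    f ⊓ (⨆ i, g i) ≤ ⨆ i, f ⊓ g i := by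
  have h := matrModular PUnit I PUnit (fun _ => X) (fun _ => Y) (fun _ => Y)
    (fun _ i => g i) (fun _ _ => 𝟙 Y) (fun _ _ => f) PUnit.unit PUnit.unit
  simp only [Category.comp_id, inv_id, iSup_const] at h
  simpa only [inf_comm] using h
end

section
/- For a small category C, the quantaloid R(C) of cribles is modular for the involution R° = {(g,f) : (f,g) ∈ R}: for cribles R : X ⇸ Y, S : Y ⇸ Z, T : X ⇸ Z, one has (S∘R) ∩ T ⊆ S ∘ (R ∩ (S°∘T)). -/
open CategoryTheory

universe v u

/-- A crible from `X` to `Y` in a small category `C`: a set of spans `(f, g)` with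
`f : U ⟶ Y`, `g : U ⟶ X` (common domain `U`), closed under precomposition. -/
structure Crible (C : Type u) [Category.{v} C] (X Y : C) where
  carrier : Set (Σ U : C, (U ⟶ Y) × (U ⟶ X))
  closed : ∀ {U V : C} (h : V ⟶ U) (f : U ⟶ Y) (g : U ⟶ X),
      (⟨U, f, g⟩ : Σ U : C, (U ⟶ Y) × (U ⟶ X)) ∈ carrier →
      (⟨V, h ≫ f, h ≫ g⟩ : Σ U : C, (U ⟶ Y) × (U ⟶ X)) ∈ carrier

namespace Crible

variable {C : Type u} [Category.{v} C] {X Y Z W : C}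

theorem ext {R S : Crible C X Y} (h : R.carrier = S.carrier) : R = S := by
  cases R; cases S; cases h; rfl

instance : PartialOrder (Crible C X Y) where
  le R S := R.carrier ⊆ S.carrier
  le_refl R := Set.Subset.refl _
  le_trans R S T h h' := Set.Subset.trans h h'
  le_antisymm R S h h' := ext (Set.Subset.antisymm h h')

/-- Composition of cribles: `comp S R = S ∘ R` for `R : X ⇸ Y`, `S : Y ⇸ Z`. -/
def comp (S : Crible C Y Z) (R : Crible C X Y) : Crible C X Z where
  carrier := {s | ∃ t : s.1 ⟶ Y,
      (⟨s.1, s.2.1, t⟩ : Σ U : C, (U ⟶ Z) × (U ⟶ Y)) ∈ S.carrier ∧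
      (⟨s.1, t, s.2.2⟩ : Σ U : C, (U ⟶ Y) × (U ⟶ X)) ∈ R.carrier}
  closed := by
    rintro U V h f g ⟨t, hS, hR⟩
    exact ⟨h ≫ t, S.closed h f t hS, R.closed h t g hR⟩

/-- The identity crible on `X`: all spans of the form `(f, f)`. -/
def idC (X : C) : Crible C X X where
  carrier := {s | s.2.1 = s.2.2}
  closed := by
    rintro U V h f g hfg
    simp only [Set.mem_setOf_eq] at hfg ⊢
    rw [hfg]

/-- The supremum (union) of a set of cribles. -/
def sup (𝒮 : Set (Crible C X Y)) : Crible C X Y where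
  carrier := ⋃ R ∈ 𝒮, R.carrier
  closed := by
    rintro U V h f g hs
    simp only [Set.mem_iUnion] at hs ⊢
    obtain ⟨R, hR, hmem⟩ := hs
    exact ⟨R, hR, R.closed h f g hmem⟩

/-- The binary meet (intersection) of two cribles. -/
def inter (R S : Crible C X Y) : Crible C X Y where
  carrier := R.carrier ∩ S.carrier
  closed := by
    rintro U V h f g ⟨h1, h2⟩
    exact ⟨R.closed h f g h1, S.closed h f g h2⟩

/-- The involute of a crible, obtained by reversing the spans. -/
def invC (R : Crible C X Y) : Crible C Y X where
  carrier := {s | (⟨s.1, s.2.2, s.2.1⟩ : Σ U : C, (U ⟶ Y) × (U ⟶ X)) ∈ R.carrier}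
  closed := by
    rintro U V h f g hm
    exact R.closed h g f hm

/-- The crible `⟨f,1⟩ : U ⇸ Y` generated by a morphism `f : U ⟶ Y`. -/
def genL (f : W ⟶ Y) : Crible C W Y where
  carrier := {s | s.2.2 ≫ f = s.2.1}
  closed := by
    rintro U V h a b hab
    simp only [Set.mem_setOf_eq] at hab ⊢
    rw [Category.assoc, hab]

/-- The crible `⟨1,f⟩ : Y ⇸ U` generated by a morphism `f : U ⟶ Y`. -/
def genR (f : W ⟶ Y) : Crible C Y W where
  carrier := {s | s.2.1 ≫ f = s.2.2}
  closed := by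
    rintro U V h a b hab
    simp only [Set.mem_setOf_eq] at hab ⊢
    rw [Category.assoc, hab]

end Crible

/-- The quantaloid of cribles in a small category is modular for the
span-reversing involution. -/
theorem stmt_13 {C : Type u} [Category.{v} C] {X Y Z : C}
    (R : Crible C X Y) (S : Crible C Y Z) (T : Crible C X Z) :
    Crible.inter (Crible.comp S R) T ≤
      Crible.comp S (Crible.inter R (Crible.comp (Crible.invC S) T)) := by
  rintro ⟨_, f, g⟩ ⟨⟨t, hS, hR⟩, hT⟩
  -- The same middle leg `t` still works, and `(t, g) ∈ S° ∘ T` is witnessed by `f`,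
  -- since `(t, f) ∈ S°` is `hS` read backwards.
  exact ⟨t, hS, hR, f, hS, hT⟩
end

section
/- For a small category C, the quantaloid R(C) of cribles is weakly tabular: every crible R : X ⇸ Y satisfies R = ⋃ { ⟨f,1⟩ ∘ ⟨1,g⟩ : (f,g) ∈ R }, where ⟨f,1⟩ and ⟨1,g⟩ are the cribles generated by the spans (f,1) and (1,g) respectively; in particular R is the union of composites L∘M* over spans of left adjoints with L∘M* ⊆ R. -/
/-! The composite `⟨f,1⟩ ∘ ⟨1,g⟩` consists exactly of the spans `(t ≫ f, t ≫ g)`, i.e. it is the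
crible generated by the span `(f, g)`. It contains `(f, g)`, and since cribles are closed under
precomposition it lies below every crible containing `(f, g)`. -/

open CategoryTheory

universe v u

namespace Crible

variable {C : Type u} [Category.{v} C] {X Y U : C}

theorem mem_sup_iff {𝒮 : Set (Crible C X Y)} {s : Σ U : C, (U ⟶ Y) × (U ⟶ X)} :
    s ∈ (sup 𝒮).carrier ↔ ∃ T ∈ 𝒮, s ∈ T.carrier := by
  simp only [sup, Set.mem_iUnion, exists_prop]

theorem eq_sup_of_forall_le_of_forall_mem {R : Crible C X Y} {𝒮 : Set (Crible C X Y)}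
    (hle : ∀ T ∈ 𝒮, T ≤ R) (hcover : ∀ s ∈ R.carrier, ∃ T ∈ 𝒮, s ∈ T.carrier) :
    R = sup 𝒮 :=
  ext <| Set.Subset.antisymm (fun s hs => mem_sup_iff.2 (hcover s hs)) fun _ hs =>
    let ⟨T, hT, hsT⟩ := mem_sup_iff.1 hs
    hle T hT hsT

theorem mem_comp_genL_genR_iff {f : U ⟶ Y} {g : U ⟶ X} {V : C} {a : V ⟶ Y} {b : V ⟶ X} :
    (⟨V, a, b⟩ : Σ U : C, (U ⟶ Y) × (U ⟶ X)) ∈ (comp (genL f) (genR g)).carrier ↔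
      ∃ t : V ⟶ U, t ≫ f = a ∧ t ≫ g = b :=
  Iff.rfl

theorem mem_comp_genL_genR_self (f : U ⟶ Y) (g : U ⟶ X) :
    (⟨U, f, g⟩ : Σ U : C, (U ⟶ Y) × (U ⟶ X)) ∈ (comp (genL f) (genR g)).carrier :=
  mem_comp_genL_genR_iff.2 ⟨𝟙 U, Category.id_comp f, Category.id_comp g⟩

theorem comp_genL_genR_le {R : Crible C X Y} {f : U ⟶ Y} {g : U ⟶ X}
    (h : (⟨U, f, g⟩ : Σ U : C, (U ⟶ Y) × (U ⟶ X)) ∈ R.carrier) :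
    comp (genL f) (genR g) ≤ R := by
  rintro ⟨V, a, b⟩ hs
  obtain ⟨t, rfl, rfl⟩ := mem_comp_genL_genR_iff.1 hs
  exact R.closed t f g h

end Crible

/-- The quantaloid of cribles in a small category is weakly tabular: every crible
`R : X ⇸ Y` is the union of the composites `⟨f,1⟩ ∘ ⟨1,g⟩` over the spans `(f,g) ∈ R`;
in particular it is the union of such composites of (left adjoint, right adjoint)
pairs lying below `R`. -/
theorem stmt_16 {C : Type u} [Category.{v} C] {X Y : C} (R : Crible C X Y) :
    R = Crible.sup {T : Crible C X Y | ∃ (U : C) (f : U ⟶ Y) (g : U ⟶ X),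
        (⟨U, f, g⟩ : Σ U : C, (U ⟶ Y) × (U ⟶ X)) ∈ R.carrier ∧
        T = Crible.comp (Crible.genL f) (Crible.genR g)} ∧
    R = Crible.sup {T : Crible C X Y | ∃ (U : C) (f : U ⟶ Y) (g : U ⟶ X),
        T = Crible.comp (Crible.genL f) (Crible.genR g) ∧ T ≤ R} := by
  refine ⟨Crible.eq_sup_of_forall_le_of_forall_mem ?_ ?_,
    Crible.eq_sup_of_forall_le_of_forall_mem ?_ ?_⟩
  · rintro _ ⟨U, f, g, h, rfl⟩
    exact Crible.comp_genL_genR_le h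
  · rintro ⟨U, f, g⟩ h
    exact ⟨_, ⟨U, f, g, h, rfl⟩, Crible.mem_comp_genL_genR_self f g⟩
  · rintro _ ⟨U, f, g, rfl, hle⟩
    exact hle
  · rintro ⟨U, f, g⟩ h
    exact ⟨_, ⟨U, f, g, rfl, Crible.comp_genL_genR_le h⟩, Crible.mem_comp_genL_genR_self f g⟩
end

section
/- The quantale ([0,∞], inf, +, 0) of extended nonnegative reals, with multiplication given by addition, order the reverse of the usual order (so suprema are infima of reals), and unit 0, is not weakly tabular. -/
open scoped ENNReal

/-! In `[0,∞]` a left adjoint `f` satisfies `f* + f ≤ 0`, which forces `f = 0` (and `f* = 0`),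
so every composite `f + g*` of a left and a right adjoint is `0`. For `0 < q < ∞` no composite
lies above `q`, so the infimum in the weak tabularity condition is the empty infimum `∞ ≠ q`. -/

theorem add_eq_zero_of_adjoints {M : Type*} [AddCommMonoid M] [PartialOrder M]
    [CanonicallyOrderedAdd M] {f fs g gs : M} (hf : fs + f ≤ 0) (hg : gs + g ≤ 0) :
    f + gs = 0 := by
  obtain ⟨-, rfl⟩ := add_eq_zero.mp (nonpos_iff_eq_zero.mp hf)
  obtain ⟨rfl, -⟩ := add_eq_zero.mp (nonpos_iff_eq_zero.mp hg)
  exact add_zero 0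

/-- The quantale `([0,∞], ⋀, +, 0)` of extended nonnegative reals — whose lattice
order is the reverse of the usual order (so suprema are real infima), whose
multiplication is addition and whose unit is `0` — is not weakly tabular: it is not
true that every `q` is the real infimum of the composites `f + gs` of a left adjoint
`f` and a right adjoint `gs` lying (real-)above `q`. -/
theorem stmt_18 :
    ¬ (∀ q : ℝ≥0∞, q = sInf {r : ℝ≥0∞ | ∃ f fs g gs : ℝ≥0∞,
        (fs + f ≤ 0 ∧ 0 ≤ f + fs) ∧ (gs + g ≤ 0 ∧ 0 ≤ g + gs) ∧
        r = f + gs ∧ q ≤ r}) := by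
  intro h
  have hempty : {r : ℝ≥0∞ | ∃ f fs g gs : ℝ≥0∞,
      (fs + f ≤ 0 ∧ 0 ≤ f + fs) ∧ (gs + g ≤ 0 ∧ 0 ≤ g + gs) ∧ r = f + gs ∧ 1 ≤ r} = ∅ := by
    refine Set.eq_empty_of_forall_notMem ?_
    rintro r ⟨f, fs, g, gs, ⟨hf, -⟩, ⟨hg, -⟩, rfl, hle⟩
    rw [add_eq_zero_of_adjoints hf hg] at hle
    exact one_ne_zero (nonpos_iff_eq_zero.mp hle)
  have h1 := h 1
  rw [hempty, sInf_empty] at h1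
  exact ENNReal.one_ne_top h1
end

section
/- Let G be a small groupoid. Then the quantaloid R(G) of cribles in G is isomorphic, as an involutive quantaloid, to the free quantaloid Q(G) on G (whose morphisms X → Y are subsets of G(X,Y), with union as supremum, elementwise composition, and involution S° = { s⁻¹ : s ∈ S }), via the mutually inverse assignments F(R) = { h⁻¹ ∘ g : (g,h) ∈ R } and G(S) = { (s∘h, h) : s ∈ S, cod h = dom s }. -/
open CategoryTheory

universe v u

/-- The set of morphisms associated to a crible in a groupoid: `F(R) = { h⁻¹ ≫ g : (g,h) ∈ R }`. -/
def cribleToSet {G : Type u} [Groupoid.{v} G] {X Y : G} (R : Crible G X Y) : Set (X ⟶ Y) :=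
  {q | ∃ (U : G) (g : U ⟶ Y) (h : U ⟶ X),
      (⟨U, g, h⟩ : Σ U : G, (U ⟶ Y) × (U ⟶ X)) ∈ R.carrier ∧ q = Groupoid.inv h ≫ g}

/-- The crible generated by a set of morphisms in a groupoid:
`G(S) = { (s ∘ h, h) : s ∈ S, cod h = dom s }`. -/
def setToCrible {G : Type u} [Groupoid.{v} G] {X Y : G} (S : Set (X ⟶ Y)) : Crible G X Y where
  carrier := {s | ∃ q ∈ S, s.2.2 ≫ q = s.2.1}
  closed := by
    rintro U V h f g ⟨q, hq, he⟩
    refine ⟨q, hq, ?_⟩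
    simp only [Set.mem_setOf_eq] at he ⊢
    rw [Category.assoc, he]


/-!
In a groupoid every span `(g, h)` of a crible can be moved along the isomorphism `h` to the
normalised span `(h⁻¹ ≫ g, 𝟙)`, so a crible is determined by its normalised spans, and
`F(R)` is exactly the set of morphisms `q` with `(q, 𝟙) ∈ R`. Under this description each of
the quantaloid operations on cribles becomes the corresponding operation on sets of morphisms.
-/

namespace Crible

section Category

variable {C : Type u} [Category.{v} C] {X Y : C}

theorem mem_carrier_iff_of_isIso (R : Crible C X Y) {U V : C} (e : V ⟶ U) [IsIso e]
    (f : U ⟶ Y) (g : U ⟶ X) :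
    (⟨V, e ≫ f, e ≫ g⟩ : Σ U : C, (U ⟶ Y) × (U ⟶ X)) ∈ R.carrier ↔
      (⟨U, f, g⟩ : Σ U : C, (U ⟶ Y) × (U ⟶ X)) ∈ R.carrier := by
  refine ⟨fun h => ?_, R.closed e f g⟩
  simpa using R.closed (inv e) _ _ h

end Category

variable {G : Type u} [Groupoid.{v} G] {X Y : G}

theorem mem_carrier_iff_inv_comp (R : Crible G X Y) {U : G} (g : U ⟶ Y) (h : U ⟶ X) :
    (⟨U, g, h⟩ : Σ U : G, (U ⟶ Y) × (U ⟶ X)) ∈ R.carrier ↔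
      (⟨X, inv h ≫ g, 𝟙 X⟩ : Σ U : G, (U ⟶ Y) × (U ⟶ X)) ∈ R.carrier := by
  simpa using R.mem_carrier_iff_of_isIso h (inv h ≫ g) (𝟙 X)

end Crible

section Groupoid

open Crible

variable {G : Type u} [Groupoid.{v} G] {X Y Z : G}

theorem mem_cribleToSet_iff (R : Crible G X Y) (q : X ⟶ Y) :
    q ∈ cribleToSet R ↔ (⟨X, q, 𝟙 X⟩ : Σ U : G, (U ⟶ Y) × (U ⟶ X)) ∈ R.carrier := by
  constructor
  · rintro ⟨U, g, h, hR, rfl⟩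
    simpa [mem_carrier_iff_inv_comp R g h] using hR
  · exact fun hR => ⟨X, q, 𝟙 X, hR, by simp⟩

theorem mem_setToCrible_carrier_iff (S : Set (X ⟶ Y)) {U : G} (f : U ⟶ Y) (g : U ⟶ X) :
    (⟨U, f, g⟩ : Σ U : G, (U ⟶ Y) × (U ⟶ X)) ∈ (setToCrible S).carrier ↔ inv g ≫ f ∈ S := by
  simp only [setToCrible, Set.mem_ofPred_eq, ← IsIso.eq_inv_comp, exists_eq_right]

theorem setToCrible_cribleToSet (R : Crible G X Y) : setToCrible (cribleToSet R) = R := by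
  refine Crible.ext (Set.ext fun ⟨U, f, g⟩ => ?_)
  rw [mem_setToCrible_carrier_iff, mem_cribleToSet_iff, ← mem_carrier_iff_inv_comp]

theorem cribleToSet_setToCrible (S : Set (X ⟶ Y)) : cribleToSet (setToCrible S) = S := by
  ext q
  simp [mem_cribleToSet_iff, mem_setToCrible_carrier_iff]

theorem cribleToSet_comp (R : Crible G X Y) (S : Crible G Y Z) :
    cribleToSet (Crible.comp S R) =
      {q : X ⟶ Z | ∃ a ∈ cribleToSet R, ∃ b ∈ cribleToSet S, q = a ≫ b} := by
  ext q
  simp only [mem_cribleToSet_iff, Crible.comp, Set.mem_ofPred_eq]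
  constructor
  · rintro ⟨t, hS, hR⟩
    exact ⟨t, hR, inv t ≫ q, (mem_carrier_iff_inv_comp S q t).1 hS, by simp⟩
  · rintro ⟨a, hR, b, hS, rfl⟩
    exact ⟨a, by simpa [mem_carrier_iff_inv_comp S (a ≫ b) a] using hS, hR⟩

theorem cribleToSet_idC (X : G) : cribleToSet (Crible.idC X) = {𝟙 X} := by
  ext q
  simp [mem_cribleToSet_iff, Crible.idC]

theorem cribleToSet_sup (𝒮 : Set (Crible G X Y)) :
    cribleToSet (Crible.sup 𝒮) = ⋃ R ∈ 𝒮, cribleToSet R := by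
  ext q
  simp [mem_cribleToSet_iff, Crible.sup]

theorem cribleToSet_invC (R : Crible G X Y) :
    cribleToSet (Crible.invC R) = {q : Y ⟶ X | ∃ a ∈ cribleToSet R, q = Groupoid.inv a} := by
  ext q
  simp only [mem_cribleToSet_iff, Crible.invC, Set.mem_ofPred_eq, Groupoid.inv_eq_inv]
  rw [mem_carrier_iff_inv_comp R (𝟙 Y) q, Category.comp_id]
  exact ⟨fun h => ⟨inv q, h, by simp⟩, by rintro ⟨a, h, rfl⟩; simpa using h⟩

end Groupoid

/-- For a small groupoid `G`, the quantaloid of cribles in `G` is isomorphic, as an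
involutive quantaloid, to the free quantaloid on `G`: `R ↦ F(R) = {h⁻¹ ≫ g : (g,h) ∈ R}`
and `S ↦ G(S) = {(s ∘ h, h) : s ∈ S}` are mutually inverse, and `F` sends composition,
identities, suprema and the involution of cribles to elementwise composition,
singleton identities, unions and elementwise inversion of subsets. -/
theorem stmt_19 {G : Type u} [Groupoid.{v} G] :
    (∀ {X Y : G} (R : Crible G X Y), setToCrible (cribleToSet R) = R) ∧
    (∀ {X Y : G} (S : Set (X ⟶ Y)), cribleToSet (setToCrible S) = S) ∧
    (∀ {X Y Z : G} (R : Crible G X Y) (S : Crible G Y Z),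
      cribleToSet (Crible.comp S R) =
        {q : X ⟶ Z | ∃ a ∈ cribleToSet R, ∃ b ∈ cribleToSet S, q = a ≫ b}) ∧
    (∀ X : G, cribleToSet (Crible.idC X) = {𝟙 X}) ∧
    (∀ {X Y : G} (𝒮 : Set (Crible G X Y)),
      cribleToSet (Crible.sup 𝒮) = ⋃ R ∈ 𝒮, cribleToSet R) ∧
    (∀ {X Y : G} (R : Crible G X Y),
      cribleToSet (Crible.invC R) = {q : Y ⟶ X | ∃ a ∈ cribleToSet R, q = Groupoid.inv a}) :=
  ⟨setToCrible_cribleToSet, cribleToSet_setToCrible, cribleToSet_comp, cribleToSet_idC,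
    cribleToSet_sup, cribleToSet_invC⟩
end
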